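/- arXiv:0912.0928 — 4 statements merged into one kernel-verified Lean document; each statement's English description precedes it below -/
import Mathlib

section
/- Let z ≥ 2, let X = Σ_{i=1}^{x} z^i c_i and Y = Σ_{j=1}^{y} z^j d_j with all digits in {1,...,z-1}, and let c be a digit with 0 < c < z. Then z·Y + z·c = Σ_{j=1}^{y+1} z^j d'_j where d'_1 = c and d'_{j+1} = d_j, and X/z − ((X/z) mod z) = Σ_{i=1}^{x-1} z^i c_{i+1}. Hence the update (X, Y) ↦ (X/z − (X/z mod z), zY + zc) correctly simulates moving the Turing machine tape head one cell to the left after writing symbol encoded by c in the scanned cell. -/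
/-!
In base `z`, multiplying by `z` shifts every digit one place up, and dividing by `z` shifts it
one place down. Once `X/z` is written as `c₁ + z·(…)`, the lowest digit `c₁ < z` is exactly
`(X/z) mod z`, so subtracting it leaves the shifted expansion of the remaining digits.
-/

lemma sum_Icc_one_succ_pow_mul (z n : ℕ) (f : ℕ → ℕ) :
    ∑ i ∈ Finset.Icc 1 (n + 1), z ^ i * f i =
      z * f 1 + z * ∑ i ∈ Finset.Icc 1 n, z ^ i * f (i + 1) := by
  induction n with
  | zero => simp
  | succ n ih =>
    rw [Finset.sum_Icc_succ_top (by omega), ih, Finset.sum_Icc_succ_top (by omega)]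
    ring

lemma dvd_sum_Icc_one_pow_mul (z n : ℕ) (f : ℕ → ℕ) :
    z ∣ ∑ i ∈ Finset.Icc 1 n, z ^ i * f i :=
  Finset.dvd_sum fun i hi =>
    (dvd_pow_self z (by rw [Finset.mem_Icc] at hi; omega)).mul_right _

lemma Nat.add_sub_mod_of_lt_of_dvd {a t z : ℕ} (ha : a < z) (ht : z ∣ t) :
    a + t - (a + t) % z = t := by
  obtain ⟨m, rfl⟩ := ht
  rw [Nat.add_mul_mod_self_left, Nat.mod_eq_of_lt ha, Nat.add_sub_cancel_left]

theorem left_move_update_general (z x y cw : ℕ) (c d : ℕ → ℕ) (hx : 1 ≤ x)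
    (hc : ∀ i, 1 ≤ i → i ≤ x → 0 < c i ∧ c i < z) :
    (∃ d' : ℕ → ℕ, d' 1 = cw ∧ (∀ j, 1 ≤ j → j ≤ y → d' (j + 1) = d j) ∧
        z * (∑ j ∈ Finset.Icc 1 y, z ^ j * d j) + z * cw =
          ∑ j ∈ Finset.Icc 1 (y + 1), z ^ j * d' j) ∧
    ((∑ i ∈ Finset.Icc 1 x, z ^ i * c i) / z -
        ((∑ i ∈ Finset.Icc 1 x, z ^ i * c i) / z) % z =
      ∑ i ∈ Finset.Icc 1 (x - 1), z ^ i * c (i + 1)) := by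
  refine ⟨⟨fun j => if j = 1 then cw else d (j - 1), rfl, fun j hj _ => by
    dsimp only; rw [if_neg (by omega), Nat.add_sub_cancel], ?_⟩, ?_⟩
  · rw [sum_Icc_one_succ_pow_mul, if_pos rfl, add_comm (z * cw)]
    refine congrArg (z * · + z * cw) (Finset.sum_congr rfl fun j hj => ?_)
    rw [Finset.mem_Icc] at hj
    rw [if_neg (by omega), Nat.add_sub_cancel]
  · have hc₁ : c 1 < z := (hc 1 le_rfl hx).2
    obtain ⟨n, rfl⟩ := Nat.exists_eq_add_of_le' hx
    rw [sum_Icc_one_succ_pow_mul, ← mul_add, Nat.mul_div_cancel_left _ (by omega),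
      Nat.add_sub_cancel, Nat.add_sub_mod_of_lt_of_dvd hc₁ (dvd_sum_Icc_one_pow_mul z n _)]

/-- Arithmetic correctness of the left-move update (top case of Equation (3)):
`z·Y + z·c` is the encoding of the right sequence extended by a new first cell
containing the write symbol `c`, and `X/z − ((X/z) mod z)` is the encoding of
the left sequence with its first cell removed. -/
theorem left_move_update (z x y cw : ℕ) (c d : ℕ → ℕ) (hz : 2 ≤ z) (hx : 1 ≤ x)
    (hc : ∀ i, 1 ≤ i → i ≤ x → 0 < c i ∧ c i < z)
    (hd : ∀ j, 1 ≤ j → j ≤ y → 0 < d j ∧ d j < z)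
    (hcw : 0 < cw ∧ cw < z) :
    (∃ d' : ℕ → ℕ, d' 1 = cw ∧ (∀ j, 1 ≤ j → j ≤ y → d' (j + 1) = d j) ∧
        z * (∑ j ∈ Finset.Icc 1 y, z ^ j * d j) + z * cw =
          ∑ j ∈ Finset.Icc 1 (y + 1), z ^ j * d' j) ∧
    ((∑ i ∈ Finset.Icc 1 x, z ^ i * c i) / z -
        ((∑ i ∈ Finset.Icc 1 x, z ^ i * c i) / z) % z =
      ∑ i ∈ Finset.Icc 1 (x - 1), z ^ i * c (i + 1)) :=
  left_move_update_general z x y cw c d hx hc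
end

section
/- Let z ≥ 2, let X, Y encode the left and right tape contents with all base-z digits in {1,...,z-1}, and let c with 0 < c < z encode the write symbol. Then the update (X, Y) ↦ (zX + zc, Y/z − (Y/z mod z)) correctly simulates a right move of the tape head: zX + zc is the encoding of the left sequence extended by one cell containing the write symbol, and Y/z − (Y/z mod z) is the encoding of the right sequence with its first cell removed, while (Y/z) mod z is the digit encoding the symbol in the new scanned cell. -/
/-!
Shifting the index of a code by one multiplies it by `z`: with `T = ∑_{j=1}^{y-1} z^j d_{j+1}`
we get `Y = z (d_1 + T)`, and likewise `z X + z c` is the code of `c, c_1, …, c_x`. So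
`Y / z = d_1 + T`, and since `z ∣ T` and `d_1 < z`, `(Y / z) mod z = d_1`; subtracting it leaves `T`.
-/

open Finset

theorem Finset.sum_Icc_one_succ {M : Type*} [AddCommMonoid M] (f : ℕ → M) (n : ℕ) :
    ∑ i ∈ Icc 1 (n + 1), f i = f 1 + ∑ i ∈ Icc 1 n, f (i + 1) := by
  rw [← insert_Icc_add_one_left_eq_Icc (by omega), sum_insert (by simp), ← map_add_right_Icc,
    sum_map]
  rfl

def tapeEncoding {R : Type*} [CommSemiring R] (z : R) (n : ℕ) (a : ℕ → R) : R :=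
  ∑ i ∈ Icc 1 n, z ^ i * a i

section consCell

variable {α : Type*} (w : α) (a : ℕ → α)

def consCell (i : ℕ) : α :=
  if i = 1 then w else a (i - 1)

theorem consCell_one : consCell w a 1 = w := if_pos rfl

theorem consCell_succ {i : ℕ} (hi : 1 ≤ i) : consCell w a (i + 1) = a i := by
  simp [consCell, show i ≠ 0 by omega]

end consCell

section CommSemiring

variable {R : Type*} [CommSemiring R] (z : R)

theorem tapeEncoding_congr {n : ℕ} {a b : ℕ → R} (h : ∀ i, 1 ≤ i → i ≤ n → a i = b i) :
    tapeEncoding z n a = tapeEncoding z n b :=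
  sum_congr rfl fun i hi => by rw [h i (mem_Icc.1 hi).1 (mem_Icc.1 hi).2]

theorem tapeEncoding_succ (n : ℕ) (a : ℕ → R) :
    tapeEncoding z (n + 1) a = z * (a 1 + tapeEncoding z n fun i => a (i + 1)) := by
  simp only [tapeEncoding, sum_Icc_one_succ, mul_add, mul_sum, pow_succ]
  congr 1
  · ring
  · exact sum_congr rfl fun i _ => by ring

theorem dvd_tapeEncoding (n : ℕ) (a : ℕ → R) : z ∣ tapeEncoding z n a :=
  dvd_sum fun i hi => (dvd_pow_self z (by grind)).mul_right _

theorem tapeEncoding_consCell (n : ℕ) (w : R) (a : ℕ → R) :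
    tapeEncoding z (n + 1) (consCell w a) = z * tapeEncoding z n a + z * w := by
  rw [tapeEncoding_succ, consCell_one, tapeEncoding_congr z fun i hi _ => consCell_succ w a hi,
    mul_add, add_comm]

end CommSemiring

section Nat

variable {z : ℕ}

theorem tapeEncoding_succ_div (hz : 0 < z) (n : ℕ) (a : ℕ → ℕ) :
    tapeEncoding z (n + 1) a / z = a 1 + tapeEncoding z n fun i => a (i + 1) := by
  rw [tapeEncoding_succ, Nat.mul_div_cancel_left _ hz]

theorem tapeEncoding_succ_div_mod {n : ℕ} {a : ℕ → ℕ} (ha : a 1 < z) :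
    tapeEncoding z (n + 1) a / z % z = a 1 := by
  obtain ⟨k, hk⟩ := dvd_tapeEncoding z n fun i => a (i + 1)
  rw [tapeEncoding_succ_div (by omega), hk, Nat.add_mul_mod_self_left, Nat.mod_eq_of_lt ha]

theorem tapeEncoding_succ_div_sub_mod {n : ℕ} {a : ℕ → ℕ} (ha : a 1 < z) :
    tapeEncoding z (n + 1) a / z - tapeEncoding z (n + 1) a / z % z =
      tapeEncoding z n fun i => a (i + 1) := by
  rw [tapeEncoding_succ_div_mod ha, tapeEncoding_succ_div (by omega), Nat.add_sub_cancel_left]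

end Nat

theorem right_move_update_general (z x y cw : ℕ) (c d : ℕ → ℕ) (hy : 1 ≤ y)
    (hd : ∀ j, 1 ≤ j → j ≤ y → 0 < d j ∧ d j < z) :
    (∃ c' : ℕ → ℕ, c' 1 = cw ∧ (∀ i, 1 ≤ i → i ≤ x → c' (i + 1) = c i) ∧
        z * (∑ i ∈ Finset.Icc 1 x, z ^ i * c i) + z * cw =
          ∑ i ∈ Finset.Icc 1 (x + 1), z ^ i * c' i) ∧
    ((∑ j ∈ Finset.Icc 1 y, z ^ j * d j) / z -
        ((∑ j ∈ Finset.Icc 1 y, z ^ j * d j) / z) % z =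
      ∑ j ∈ Finset.Icc 1 (y - 1), z ^ j * d (j + 1)) ∧
    ((∑ j ∈ Finset.Icc 1 y, z ^ j * d j) / z) % z = d 1 := by
  have hd₁ : d 1 < z := (hd 1 le_rfl hy).2
  obtain ⟨n, rfl⟩ : ∃ n, y = n + 1 := ⟨y - 1, by omega⟩
  exact ⟨⟨consCell cw c, consCell_one cw c, fun i hi _ => consCell_succ cw c hi,
      (tapeEncoding_consCell z x cw c).symm⟩,
    tapeEncoding_succ_div_sub_mod hd₁, tapeEncoding_succ_div_mod hd₁⟩

/-- Arithmetic correctness of the right-move update (bottom case of Equation (3)):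
`z·X + z·c` encodes the left sequence extended by one cell containing the write
symbol `c`, `Y/z − ((Y/z) mod z)` encodes the right sequence with its first cell
removed, and `(Y/z) mod z` is the digit encoding the symbol in the new scanned cell. -/
theorem right_move_update (z x y cw : ℕ) (c d : ℕ → ℕ) (hz : 2 ≤ z) (hy : 1 ≤ y)
    (hc : ∀ i, 1 ≤ i → i ≤ x → 0 < c i ∧ c i < z)
    (hd : ∀ j, 1 ≤ j → j ≤ y → 0 < d j ∧ d j < z)
    (hcw : 0 < cw ∧ cw < z) :
    (∃ c' : ℕ → ℕ, c' 1 = cw ∧ (∀ i, 1 ≤ i → i ≤ x → c' (i + 1) = c i) ∧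
        z * (∑ i ∈ Finset.Icc 1 x, z ^ i * c i) + z * cw =
          ∑ i ∈ Finset.Icc 1 (x + 1), z ^ i * c' i) ∧
    ((∑ j ∈ Finset.Icc 1 y, z ^ j * d j) / z -
        ((∑ j ∈ Finset.Icc 1 y, z ^ j * d j) / z) % z =
      ∑ j ∈ Finset.Icc 1 (y - 1), z ^ j * d (j + 1)) ∧
    ((∑ j ∈ Finset.Icc 1 y, z ^ j * d j) / z) % z = d 1 :=
  right_move_update_general z x y cw c d hy hd
end

section
/- There is no spiking neural P system with a constant number of neurons (independent of input length) that simulates every Turing machine with less than exponential time overhead: specifically, assuming (a) any k-counter machine recognizing the language L = {w a w^r : w ∈ {0,1}*} requires time at least 2^{n/(2k)} on inputs of length n (Fischer's theorem), and (b) counter machines simulate m-neuron spiking neural P systems with linear time overhead (Theorem 2), it follows that any spiking neural P system recognizing L requires time at least c·2^{n/(2(m+1))} for some constant c > 0. -/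
/-- Corollary 1 of the paper. Let `tSNP n` be the running time of a spiking
neural P system with `m` neurons recognizing the language
`L = {w a w^r : w ∈ {0,1}*}` on inputs of length `n`, and let `CMTime t` mean
that `t` is the running-time function of some `(m+1)`-counter machine
recognizing `L`. Assuming (a) Fischer's lower bound: every such counter
machine needs time at least `2^{n/(2(m+1))}`, and (b) Theorem 2: some
`(m+1)`-counter machine recognizes `L` in time linearly bounded by `tSNP`,
the spiking neural P system requires at least exponential time:
`tSNP n ≥ c · 2^{n/(2(m+1))}` for some constant `c > 0` and all large `n`. -/
theorem no_subexponential_SNP (m : ℕ) (tSNP : ℕ → ℝ)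
    (CMTime : (ℕ → ℝ) → Prop)
    (fischer : ∀ t, CMTime t →
      ∀ n : ℕ, (2 : ℝ) ^ ((n : ℝ) / (2 * ((m : ℝ) + 1))) ≤ t n)
    (sim : ∃ a b : ℝ, 0 < a ∧ ∃ t, CMTime t ∧ ∀ n, t n ≤ a * tSNP n + b) :
    ∃ c : ℝ, 0 < c ∧ ∃ n₀ : ℕ, ∀ n ≥ n₀,
      c * (2 : ℝ) ^ ((n : ℝ) / (2 * ((m : ℝ) + 1))) ≤ tSNP n := by
  obtain ⟨a, b, ha, t, hCM, hbound⟩ := sim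
  set D : ℝ := 2 * ((m : ℝ) + 1) with hD
  have hDpos : 0 < D := by positivity
  set B : ℝ := max b 0 with hB
  have hBnonneg : 0 ≤ B := le_max_right _ _
  refine ⟨1 / (2 * a), by positivity, ⟨⌈D * Real.logb 2 (2 * B + 1)⌉₊, ?_⟩⟩
  intro n hn
  have hexp : 2 * B + 1 ≤ (2 : ℝ) ^ ((n : ℝ) / D) := by
    have h1 : D * Real.logb 2 (2 * B + 1) ≤ (n : ℝ) := by
      calc D * Real.logb 2 (2 * B + 1)
          ≤ (⌈D * Real.logb 2 (2 * B + 1)⌉₊ : ℝ) := Nat.le_ceil _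
        _ ≤ (n : ℝ) := Nat.cast_le.mpr hn
    have h2 : Real.logb 2 (2 * B + 1) ≤ (n : ℝ) / D := by
      rw [le_div_iff₀ hDpos]
      linarith [mul_comm D (Real.logb 2 (2 * B + 1))]
    calc (2 * B + 1 : ℝ) = 2 ^ Real.logb 2 (2 * B + 1) :=
          (Real.rpow_logb (by norm_num) (by norm_num) (by linarith)).symm
      _ ≤ 2 ^ ((n : ℝ) / D) := Real.rpow_le_rpow_of_exponent_le (by norm_num) h2
  have h3 : (2 : ℝ) ^ ((n : ℝ) / D) ≤ a * tSNP n + b := le_trans (fischer t hCM n) (hbound n)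
  have h4 : a * tSNP n ≥ (2 : ℝ) ^ ((n : ℝ) / D) - B := by
    have : b ≤ B := le_max_left _ _
    linarith
  have h5 : B ≤ (2 : ℝ) ^ ((n : ℝ) / D) / 2 := by linarith
  have h6 : (2 : ℝ) ^ ((n : ℝ) / D) / 2 ≤ a * tSNP n := by linarith
  rw [div_mul_eq_mul_div, one_mul, div_le_iff₀ (by positivity)]
  calc (2 : ℝ) ^ ((n : ℝ) / D) = ((2 : ℝ) ^ ((n : ℝ) / D) / 2) * 2 := by ring
    _ ≤ (a * tSNP n) * 2 := by linarith
    _ = tSNP n * (2 * a) := by ring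
end

section
/- Injectivity of the full configuration encoding: with z = 2^⌈log₂(2|Q||A|+2|A|)⌉, states encoded as ⟨q_r⟩ = 2r|A| and symbols as ⟨α_k⟩ = 2k−1, the map sending a Turing machine configuration C (current state q_r, scanned symbol α_i, left tape contents a_{-1},...,a_{-x} ending in the blank α_1, right tape contents a_1,...,a_y ending in α_1) to the triple (X, Y, ⟨q_r⟩+⟨α_i⟩) with X = Σ_{i=1}^x z^i⟨a_{-i}⟩ and Y = Σ_{j=1}^y z^j⟨a_j⟩ is injective on configurations where trailing blanks are normalized (x and y minimal with a_{-x} = a_y = α_1). -/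
/-- `encSeq z [a₁, ..., a_x] = ∑_{i=1}^{x} z^i ⟨a_i⟩` where `⟨a⟩ = 2a − 1`. -/
def encSeq (z : ℕ) (L : List ℕ) : ℕ :=
  z * L.foldr (fun a acc => (2 * a - 1) + z * acc) 0

/-- Trailing blanks are normalized: the sequence is nonempty, its last cell
contains the blank symbol `α_1`, and it is minimal (the penultimate cell is
not blank). -/
def NormalizedSeq (L : List ℕ) : Prop :=
  L ≠ [] ∧ L.getLast? = some 1 ∧ (2 ≤ L.length → L.getD (L.length - 2) 0 ≠ 1)

lemma foldr_enc_inj (z A : ℕ) (hA : 1 ≤ A) (hzA : 2 * A ≤ z) :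
    ∀ L M : List ℕ, (∀ a ∈ L, 1 ≤ a ∧ a ≤ A) → (∀ a ∈ M, 1 ≤ a ∧ a ≤ A) →
    L.foldr (fun a acc => (2 * a - 1) + z * acc) 0
      = M.foldr (fun a acc => (2 * a - 1) + z * acc) 0 → L = M := by
  intro L
  induction L with
  | nil =>
    intro M _ hM h
    cases M with
    | nil => rfl
    | cons b M' =>
      exfalso
      simp only [List.foldr] at h
      obtain ⟨hb1, _⟩ := hM b (by simp)
      omega
  | cons a L' ih =>
    intro M hL hM h
    cases M with
    | nil =>
      exfalso
      simp only [List.foldr] at h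
      obtain ⟨ha1, _⟩ := hL a (by simp)
      omega
    | cons b M' =>
      simp only [List.foldr] at h
      obtain ⟨ha1, ha2⟩ := hL a (by simp)
      obtain ⟨hb1, hb2⟩ := hM b (by simp)
      set u := L'.foldr (fun a acc => (2 * a - 1) + z * acc) 0 with hu
      set v := M'.foldr (fun a acc => (2 * a - 1) + z * acc) 0 with hv
      have hda : 2 * a - 1 < z := by omega
      have hdb : 2 * b - 1 < z := by omega
      have hmod : (2 * a - 1) % z = (2 * b - 1) % z := by
        rw [← Nat.add_mul_mod_self_left (2 * a - 1) z u,
            ← Nat.add_mul_mod_self_left (2 * b - 1) z v, h]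
      rw [Nat.mod_eq_of_lt hda, Nat.mod_eq_of_lt hdb] at hmod
      have hab : a = b := by omega
      have hz0 : 0 < z := by omega
      have hzuv : z * u = z * v := by omega
      have hrest : u = v := Nat.eq_of_mul_eq_mul_left hz0 hzuv
      have := ih M' (fun x hx => hL x (by simp [hx])) (fun x hx => hM x (by simp [hx])) hrest
      rw [hab, this]

/-- Injectivity of the full configuration encoding (Equation (2)): with
`z = 2^⌈log₂(2|Q||A|+2|A|)⌉`, states encoded as `⟨q_r⟩ = 2rA` and symbols as
`⟨α_k⟩ = 2k − 1`, the map sending a configuration (state `r`, scanned symbol `i`,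
left contents `L`, right contents `R`, trailing blanks normalized) to
`(X, Y, ⟨q_r⟩ + ⟨α_i⟩)` is injective. -/
theorem config_encoding_injective (Q A : ℕ) (hQ : 1 ≤ Q) (hA : 1 ≤ A)
    (z : ℕ) (hz : z = 2 ^ Nat.clog 2 (2 * Q * A + 2 * A))
    (r r' i i' : ℕ) (L R L' R' : List ℕ)
    (hr : 1 ≤ r ∧ r ≤ Q) (hi : 1 ≤ i ∧ i ≤ A)
    (hr' : 1 ≤ r' ∧ r' ≤ Q) (hi' : 1 ≤ i' ∧ i' ≤ A)
    (hL : ∀ a ∈ L, 1 ≤ a ∧ a ≤ A) (hR : ∀ a ∈ R, 1 ≤ a ∧ a ≤ A)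
    (hL' : ∀ a ∈ L', 1 ≤ a ∧ a ≤ A) (hR' : ∀ a ∈ R', 1 ≤ a ∧ a ≤ A)
    (hnL : NormalizedSeq L) (hnR : NormalizedSeq R)
    (hnL' : NormalizedSeq L') (hnR' : NormalizedSeq R')
    (hX : encSeq z L = encSeq z L') (hY : encSeq z R = encSeq z R')
    (hq : 2 * r * A + (2 * i - 1) = 2 * r' * A + (2 * i' - 1)) :
    r = r' ∧ i = i' ∧ L = L' ∧ R = R' := by
  have hzge : 2 * Q * A + 2 * A ≤ z := by
    rw [hz]
    exact Nat.le_pow_clog one_lt_two _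
  have hzA : 2 * A ≤ z := le_trans (Nat.le_add_left _ _) hzge
  -- state and symbol
  have hri : r = r' ∧ i = i' := by
    have hA0 : 0 < 2 * A := by omega
    have hq2 : (2 * i - 1) + (2 * A) * r = (2 * i' - 1) + (2 * A) * r' := by
      have e1 : 2 * r * A = (2 * A) * r := by ring
      have e2 : 2 * r' * A = (2 * A) * r' := by ring
      omega
    have hdiv := congrArg (fun t => t / (2 * A)) hq2
    simp only [Nat.add_mul_div_left _ _ hA0] at hdiv
    rw [Nat.div_eq_of_lt (by omega : 2 * i - 1 < 2 * A),
        Nat.div_eq_of_lt (by omega : 2 * i' - 1 < 2 * A)] at hdiv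
    have hrr : r = r' := by omega
    subst hrr
    exact ⟨rfl, by omega⟩
  have hz0 : 0 < z := by omega
  unfold encSeq at hX hY
  have hXf := Nat.eq_of_mul_eq_mul_left hz0 hX
  have hYf := Nat.eq_of_mul_eq_mul_left hz0 hY
  exact ⟨hri.1, hri.2, foldr_enc_inj z A hA hzA L L' hL hL' hXf,
    foldr_enc_inj z A hA hzA R R' hR hR' hYf⟩
end
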